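/- Let S consist of 2n points given as n pairs {p_i, q_i} in a metric space, let T be a minimum spanning tree of S, let h be a maximum-weight edge of T, and let T_1, T_2 be the vertex sets of the two components of T after removing h. If both points of some pair lie in T_1 and both points of some pair lie in T_2, then EVERY feasible coloring S = R ∪ B satisfies mstCost(R) + mstCost(B) ≤ 6 · min over all feasible colorings S = R' ∪ B' of (mstCost(R') + mstCost(B')). -/

import Mathlib

/-!
Let `w` be the length of `h`. By the cut property of minimum spanning trees every pair of
points `x ∈ T₁`, `y ∈ T₂` has `dist x y ≥ w`. Every colour class contains a point of each of the
two special pairs, so it meets both `T₁` and `T₂`, and any spanning tree of it has an edge of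
length `≥ w`; hence `OPT ≥ 2w`. Joining minimum spanning trees of an optimal `R'` and `B'` by an
edge of `T` between them (of length `≤ w`) gives `mstCost S ≤ OPT + w ≤ 3/2 · OPT`. Finally,
doubling a spanning tree of `S` gives a path through `S` of length `≤ 2 · mstCost S`, which can be
shortcut to a path through `R` (or `B`), so `mstCost R + mstCost B ≤ 4 · mstCost S ≤ 6 · OPT`.
-/

variable {α : Type*} [MetricSpace α] [DecidableEq α]

def EdgeConn (E : Finset (α × α)) (x y : α) : Prop :=
  Relation.ReflTransGen (fun a b => (a, b) ∈ E ∨ (b, a) ∈ E) x y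

def IsSpanningTreeOn (X : Finset α) (E : Finset (α × α)) : Prop :=
  (∀ e ∈ E, e.1 ∈ X ∧ e.2 ∈ X) ∧ E.card + 1 = X.card ∧
    ∀ x ∈ X, ∀ y ∈ X, EdgeConn E x y

noncomputable def mstCost (X : Finset α) : ℝ :=
  sInf {c | ∃ E : Finset (α × α), IsSpanningTreeOn X E ∧ c = ∑ e ∈ E, dist e.1 e.2}

open Finset

section Paths

variable {β : Type*} [PseudoMetricSpace β]

noncomputable def pathCost : List β → ℝ
  | [] => 0
  | [_] => 0
  | a :: b :: l => dist a b + pathCost (b :: l)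

lemma pathCost_le_pathCost_cons (a : β) : ∀ l : List β, pathCost l ≤ pathCost (a :: l)
  | [] => by simp [pathCost]
  | b :: l => by
    simp only [pathCost]
    linarith [dist_nonneg (x := a) (y := b)]

lemma pathCost_cons_le (a b : β) (l : List β) :
    pathCost (a :: l) ≤ dist a b + pathCost (b :: l) := by
  cases l with
  | nil => simp [pathCost]
  | cons c t =>
    simp only [pathCost]
    linarith [dist_triangle a b c]

lemma pathCost_cons_le_of_sublist {l' l : List β} (h : l'.Sublist l) (a : β) :
    pathCost (a :: l') ≤ pathCost (a :: l) := by
  induction h generalizing a with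
  | slnil => exact le_rfl
  | @cons l' l b _ ih =>
    calc pathCost (a :: l') ≤ pathCost (a :: l) := ih a
      _ ≤ dist a b + pathCost (b :: l) := pathCost_cons_le a b l
      _ = pathCost (a :: b :: l) := by simp only [pathCost]
  | @cons_cons l' l b _ ih =>
    simp only [pathCost]
    linarith [ih b]

lemma pathCost_le_of_sublist {l' l : List β} (h : l'.Sublist l) : pathCost l' ≤ pathCost l := by
  induction h with
  | slnil => exact le_rfl
  | @cons l' l b _ ih => exact ih.trans (pathCost_le_pathCost_cons b l)
  | @cons_cons l' l b h _ => exact pathCost_cons_le_of_sublist h b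

lemma pathCost_append_cons : ∀ (l : List β) (a : β) (m : List β),
    pathCost (l ++ a :: m) = pathCost (l ++ [a]) + pathCost (a :: m)
  | [], a, m => by simp [pathCost]
  | [x], a, m => by simp [pathCost]
  | x :: y :: l, a, m => by
    have ih := pathCost_append_cons (y :: l) a m
    simp only [List.cons_append, pathCost] at ih ⊢
    rw [ih]
    ring

lemma pathCost_detour_le (l₁ : List β) (w v : β) (l₂ : List β) :
    pathCost (l₁ ++ w :: v :: l₂) ≤ pathCost (l₁ ++ w :: l₂) + 2 * dist v w := by
  rw [pathCost_append_cons l₁ w (v :: l₂), pathCost_append_cons l₁ w l₂]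
  have := pathCost_cons_le v w l₂
  simp only [pathCost, dist_comm w v] at this ⊢
  linarith

end Paths

section Graphs

variable {V : Type*}

def EdgeAdj (E : Finset (V × V)) (a b : V) : Prop :=
  (a, b) ∈ E ∨ (b, a) ∈ E

lemma EdgeAdj.edgeConn {E : Finset (V × V)} {a b : V} (h : EdgeAdj E a b) : EdgeConn E a b :=
  Relation.ReflTransGen.single h

lemma EdgeConn.symm {E : Finset (V × V)} {x y : V} (h : EdgeConn E x y) : EdgeConn E y x := by
  induction h with
  | refl => exact .refl
  | tail _ hbc ih => exact Relation.ReflTransGen.head (Or.symm hbc) ih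

lemma EdgeConn.trans {E : Finset (V × V)} {x y z : V} (hxy : EdgeConn E x y)
    (hyz : EdgeConn E y z) : EdgeConn E x z :=
  Relation.ReflTransGen.trans hxy hyz

lemma EdgeConn.mono {E E' : Finset (V × V)} (hE : E ⊆ E') {x y : V} (h : EdgeConn E x y) :
    EdgeConn E' x y :=
  Relation.ReflTransGen.mono (r := EdgeAdj E) (p := EdgeAdj E')
    (fun _ _ hab => Or.imp (@hE _) (@hE _) hab) x y h

lemma EdgeConn.exists_edgeAdj_across {E : Finset (V × V)} {P : Set V} {a b : V}
    (hab : EdgeConn E a b) (ha : a ∈ P) (hb : b ∉ P) : ∃ x ∈ P, ∃ y ∉ P, EdgeAdj E x y := by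
  induction hab with
  | refl => exact absurd ha hb
  | @tail c d _ hcd ih =>
    by_cases hc : c ∈ P
    · exact ⟨c, hc, d, hb, hcd⟩
    · exact ih hc

lemma IsSpanningTreeOn.nonempty {X : Finset V} {E : Finset (V × V)}
    (hE : IsSpanningTreeOn X E) : X.Nonempty :=
  card_pos.1 (by rw [← hE.2.1]; omega)

lemma IsSpanningTreeOn.mem_of_edgeAdj {X : Finset V} {E : Finset (V × V)}
    (hE : IsSpanningTreeOn X E) {x y : V} (h : EdgeAdj E x y) : x ∈ X ∧ y ∈ X := by
  rcases h with h | h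
  · exact hE.1 _ h
  · exact (hE.1 _ h).symm

lemma IsSpanningTreeOn.of_edgeConn_root {X : Finset V} {E : Finset (V × V)}
    (hE : ∀ e ∈ E, e.1 ∈ X ∧ e.2 ∈ X) (hcard : #E + 1 = #X) (r : V)
    (hr : ∀ z ∈ X, EdgeConn E r z) : IsSpanningTreeOn X E :=
  ⟨hE, hcard, fun x hx y hy => (hr x hx).symm.trans (hr y hy)⟩

lemma nodup_zip_tail {l : List V} (hl : l.Nodup) : (l.zip l.tail).Nodup :=
  List.Nodup.of_map Prod.snd <| by
    rw [List.map_snd_zip (by simp)]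
    exact hl.sublist (List.tail_sublist l)

variable [DecidableEq V]

/-- Handshake: the degrees sum to `2 * #E < 2 * #X`. -/
lemma IsSpanningTreeOn.exists_card_incident_le_one {X : Finset V} {E : Finset (V × V)}
    (hE : IsSpanningTreeOn X E) : ∃ v ∈ X, #{e ∈ E | e.1 = v ∨ e.2 = v} ≤ 1 := by
  have hsum : ∑ v ∈ X, (#{e ∈ E | e.1 = v} + #{e ∈ E | e.2 = v}) < ∑ _v ∈ X, 2 := by
    rw [sum_add_distrib, ← card_eq_sum_card_fiberwise fun e he => (hE.1 e he).1,
      ← card_eq_sum_card_fiberwise fun e he => (hE.1 e he).2, sum_const, smul_eq_mul]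
    have := hE.2.1
    omega
  obtain ⟨v, hv, hlt⟩ := exists_lt_of_sum_lt hsum
  refine ⟨v, hv, ?_⟩
  rw [filter_or]
  exact (card_union_le _ _).trans (by omega)

/-- Contracting the leaf `v` onto its neighbour `w` maps walks to walks avoiding `e₀`. -/
lemma EdgeConn.erase_leaf {E : Finset (V × V)} {e₀ : V × V} {v w x y : V}
    (he₀ : e₀ = (v, w) ∨ e₀ = (w, v)) (huniq : ∀ e ∈ E, e.1 = v ∨ e.2 = v → e = e₀)
    (hxy : EdgeConn E x y) (hx : x ≠ v) (hy : y ≠ v) : EdgeConn (E.erase e₀) x y := by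
  let f : V → V := fun z => if z = v then w else z
  have hstep : ∀ e ∈ E, EdgeConn (E.erase e₀) (f e.1) (f e.2) := by
    intro e he
    by_cases he' : e = e₀
    · have hfe : f e.1 = f e.2 := by rcases he₀ with rfl | rfl <;> subst he' <;> simp [f]
      rw [hfe]
      exact .refl
    · obtain ⟨h1, h2⟩ := not_or.1 (mt (huniq e he) he')
      simp only [f, if_neg h1, if_neg h2]
      exact EdgeAdj.edgeConn (Or.inl (mem_erase.2 ⟨he', he⟩))
  have : EdgeConn (E.erase e₀) (f x) (f y) := Relation.ReflTransGen.lift' f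
    (fun a b hab => hab.elim (hstep (a, b)) fun h => (hstep (b, a) h).symm) x y hxy
  simpa [f, hx, hy] using this

lemma IsSpanningTreeOn.erase_leaf {X : Finset V} {E : Finset (V × V)}
    (hE : IsSpanningTreeOn X E) {v : V} (hv : v ∈ X) (hdeg : #{e ∈ E | e.1 = v ∨ e.2 = v} ≤ 1)
    (hX : 1 < #X) : ∃ w ∈ X.erase v, ∃ e₀ ∈ E, (e₀ = (v, w) ∨ e₀ = (w, v)) ∧
      IsSpanningTreeOn (X.erase v) (E.erase e₀) := by
  obtain ⟨y, hy, hyv⟩ := exists_mem_ne hX v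
  obtain ⟨x, hx, w, hwv, hvw⟩ :=
    (hE.2.2 v hv y hy).exists_edgeAdj_across (P := {v}) rfl hyv
  subst x
  obtain ⟨e₀, he₀, he₀vw⟩ : ∃ e₀ ∈ E, e₀ = (v, w) ∨ e₀ = (w, v) :=
    hvw.elim (fun h => ⟨_, h, Or.inl rfl⟩) fun h => ⟨_, h, Or.inr rfl⟩
  have huniq : ∀ e ∈ E, e.1 = v ∨ e.2 = v → e = e₀ := fun e he hev =>
    card_le_one.1 hdeg e (mem_filter.2 ⟨he, hev⟩) e₀
      (mem_filter.2 ⟨he₀, by rcases he₀vw with rfl | rfl <;> simp⟩)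
  refine ⟨w, mem_erase.2 ⟨hwv, (hE.mem_of_edgeAdj hvw).2⟩, e₀, he₀, he₀vw, ⟨fun e he => ?_, ?_,
    fun a ha b hb => ?_⟩⟩
  · obtain ⟨hne, heE⟩ := mem_erase.1 he
    obtain ⟨h1, h2⟩ := not_or.1 (mt (huniq e heE) hne)
    exact ⟨mem_erase.2 ⟨h1, (hE.1 e heE).1⟩, mem_erase.2 ⟨h2, (hE.1 e heE).2⟩⟩
  · rw [card_erase_of_mem he₀, card_erase_of_mem hv]
    have := hE.2.1
    have := card_pos.2 ⟨e₀, he₀⟩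
    omega
  · exact (hE.2.2 a (mem_of_mem_erase ha) b (mem_of_mem_erase hb)).erase_leaf he₀vw huniq
      (ne_of_mem_erase ha) (ne_of_mem_erase hb)

def pathEdges (l : List V) : Finset (V × V) := (l.zip l.tail).toFinset

lemma edgeConn_pathEdges_head : ∀ (a : V) (t : List V), ∀ x ∈ a :: t,
    EdgeConn (pathEdges (a :: t)) a x
  | a, [], x, hx => by
    obtain rfl := List.mem_singleton.1 hx
    exact .refl
  | a, b :: t, x, hx => by
    have hsub : pathEdges (b :: t) ⊆ pathEdges (a :: b :: t) := by
      simp [pathEdges]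
    rcases List.mem_cons.1 hx with rfl | hx
    · exact Relation.ReflTransGen.refl
    · refine EdgeAdj.edgeConn (Or.inl ?_) |>.trans ((edgeConn_pathEdges_head b t x hx).mono hsub)
      simp [pathEdges]

lemma isSpanningTreeOn_pathEdges {l : List V} (hl : l.Nodup) (hne : l ≠ []) :
    IsSpanningTreeOn l.toFinset (pathEdges l) := by
  obtain ⟨a, t, rfl⟩ := List.exists_cons_of_ne_nil hne
  refine .of_edgeConn_root (fun e he => ?_) ?_ a
    fun z hz => edgeConn_pathEdges_head a t z (List.mem_toFinset.1 hz)
  · have := List.of_mem_zip (a := e.1) (b := e.2) (List.mem_toFinset.1 he)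
    simpa using And.intro this.1 (List.mem_of_mem_tail this.2)
  · rw [pathEdges, List.toFinset_card_of_nodup (nodup_zip_tail hl),
      List.toFinset_card_of_nodup hl]
    simp

end Graphs

section Trees

variable {β : Type*} [PseudoMetricSpace β]

def totalDist (E : Finset (β × β)) : ℝ := ∑ e ∈ E, dist e.1 e.2

lemma totalDist_nonneg (E : Finset (β × β)) : 0 ≤ totalDist E :=
  sum_nonneg fun _ _ => dist_nonneg

lemma EdgeAdj.dist_le {E : Finset (β × β)} {x y : β} (h : EdgeAdj E x y) {c : ℝ}
    (hc : ∀ e ∈ E, dist e.1 e.2 ≤ c) : dist x y ≤ c := by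
  rcases h with h | h
  · exact hc _ h
  · exact dist_comm x y ▸ hc _ h

lemma EdgeAdj.dist_le_totalDist {E : Finset (β × β)} {x y : β} (h : EdgeAdj E x y) :
    dist x y ≤ totalDist E :=
  h.dist_le fun _ he => single_le_sum (f := fun e : β × β => dist e.1 e.2)
    (fun _ _ => dist_nonneg) he

variable [DecidableEq β]

lemma totalDist_pathEdges {l : List β} (hl : l.Nodup) : totalDist (pathEdges l) = pathCost l := by
  rw [totalDist, pathEdges, List.sum_toFinset _ (nodup_zip_tail hl)]
  induction l with
  | nil => simp [pathCost]
  | cons a t ih =>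
    cases t with
    | nil => simp [pathCost]
    | cons b t =>
      rw [pathCost, ← ih hl.of_cons]
      simp

/-- Doubling a tree: insert each leaf right after its neighbour in a path through the rest. -/
theorem IsSpanningTreeOn.exists_path {X : Finset β} {E : Finset (β × β)}
    (hE : IsSpanningTreeOn X E) :
    ∃ l : List β, l.Nodup ∧ l.toFinset = X ∧ pathCost l ≤ 2 * totalDist E := by
  induction X using Finset.strongInduction generalizing E with
  | H X ih =>
    obtain ⟨s, hs⟩ := hE.nonempty
    rcases le_or_gt #X 1 with hX | hX
    · refine ⟨[s], List.nodup_singleton s, ?_, by simpa [pathCost] using totalDist_nonneg E⟩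
      simpa using (eq_singleton_iff_unique_mem.2 ⟨hs, fun y hy => card_le_one.1 hX y hy s hs⟩).symm
    obtain ⟨v, hv, hdeg⟩ := hE.exists_card_incident_le_one
    obtain ⟨w, hw, e₀, he₀, he₀vw, hE'⟩ := hE.erase_leaf hv hdeg hX
    obtain ⟨l', hl'nd, hl'X, hl'cost⟩ := ih _ (erase_ssubset hv) hE'
    have hwl' : w ∈ l' := by rwa [← List.mem_toFinset, hl'X]
    have hvl' : v ∉ l' := by simp [← List.mem_toFinset, hl'X]
    have hcost : totalDist E = totalDist (E.erase e₀) + dist v w := by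
      rw [totalDist, totalDist, ← add_sum_erase _ _ he₀]
      rcases he₀vw with rfl | rfl <;> simp [dist_comm, add_comm]
    obtain ⟨l₁, l₂, rfl⟩ := List.append_of_mem hwl'
    have hperm : (l₁ ++ w :: v :: l₂).Perm (v :: (l₁ ++ w :: l₂)) := by
      simpa using List.perm_middle (l₁ := l₁ ++ [w]) (a := v) (l₂ := l₂)
    refine ⟨l₁ ++ w :: v :: l₂, hperm.nodup_iff.2 (List.nodup_cons.2 ⟨hvl', hl'nd⟩), ?_, ?_⟩
    · rw [List.toFinset_eq_of_perm _ _ hperm, List.toFinset_cons, hl'X, insert_erase hv]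
    · linarith [pathCost_detour_le l₁ w v l₂]

end Trees

section MstCost

variable {M : Type*} [MetricSpace M]

lemma mstCost_le {X : Finset M} {E : Finset (M × M)} (hE : IsSpanningTreeOn X E) :
    mstCost X ≤ totalDist E :=
  csInf_le ⟨0, by rintro _ ⟨E, -, rfl⟩; exact totalDist_nonneg E⟩ ⟨E, hE, rfl⟩

lemma mstCost_nonneg (X : Finset M) : 0 ≤ mstCost X :=
  Real.sInf_nonneg <| by rintro _ ⟨E, -, rfl⟩; exact totalDist_nonneg E

lemma mstCost_empty : mstCost (∅ : Finset M) = 0 := by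
  rw [mstCost, ← Real.sInf_empty]
  congr
  refine Set.eq_empty_of_forall_notMem ?_
  rintro _ ⟨_, hE, -⟩
  exact not_nonempty_empty hE.nonempty

lemma mstCost_toFinset_le_pathCost [DecidableEq M] {l : List M} (hl : l.Nodup) :
    mstCost l.toFinset ≤ pathCost l := by
  cases l with
  | nil => simp [mstCost_empty, pathCost]
  | cons a t => exact (mstCost_le (isSpanningTreeOn_pathEdges hl (List.cons_ne_nil a t))).trans_eq (totalDist_pathEdges hl)

/-- The minimum is attained: a spanning tree on `X` is a subset of `X ×ˢ X`. -/
lemma exists_isSpanningTreeOn_totalDist_eq_mstCost {X : Finset M} (hX : X.Nonempty) :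
    ∃ E, IsSpanningTreeOn X E ∧ totalDist E = mstCost X := by
  classical
  have hne : {c | ∃ E, IsSpanningTreeOn X E ∧ c = totalDist E}.Nonempty := by
    have := isSpanningTreeOn_pathEdges X.nodup_toList (by simpa using hX.ne_empty)
    rw [toList_toFinset] at this
    exact ⟨_, _, this, rfl⟩
  have hfin : {c | ∃ E, IsSpanningTreeOn X E ∧ c = totalDist E}.Finite := by
    refine ((X ×ˢ X).powerset.finite_toSet.image totalDist).subset ?_
    rintro _ ⟨E, hE, rfl⟩
    exact ⟨E, mem_powerset.2 fun e he => mem_product.2 (hE.1 e he), rfl⟩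
  obtain ⟨E, hE, hc⟩ := hne.csInf_mem hfin
  exact ⟨E, hE, hc.symm⟩

theorem mstCost_le_two_mul_mstCost {U X : Finset M} (hUX : U ⊆ X) :
    mstCost U ≤ 2 * mstCost X := by
  classical
  rcases U.eq_empty_or_nonempty with rfl | hU
  · rw [mstCost_empty]
    linarith [mstCost_nonneg X]
  obtain ⟨E, hE, hEX⟩ := exists_isSpanningTreeOn_totalDist_eq_mstCost (hU.mono hUX)
  obtain ⟨l, hl, rfl, hcost⟩ := hE.exists_path
  have hlU : (l.filter (· ∈ U)).toFinset = U := by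
    ext x
    simpa using fun hx => List.mem_toFinset.1 (hUX hx)
  calc mstCost U = mstCost (l.filter (· ∈ U)).toFinset := by rw [hlU]
    _ ≤ pathCost (l.filter (· ∈ U)) := mstCost_toFinset_le_pathCost (hl.filter _)
    _ ≤ pathCost l := pathCost_le_of_sublist List.filter_sublist
    _ ≤ 2 * mstCost l.toFinset := hEX ▸ hcost

lemma le_mstCost_of_cut {X : Finset M} {P : Set M} {a b : M} (ha : a ∈ X) (haP : a ∈ P)
    (hb : b ∈ X) (hbP : b ∉ P) {c : ℝ} (hc : ∀ x ∈ X, ∀ y ∈ X, x ∈ P → y ∉ P → c ≤ dist x y) :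
    c ≤ mstCost X := by
  obtain ⟨E, hE, hEX⟩ := exists_isSpanningTreeOn_totalDist_eq_mstCost ⟨a, ha⟩
  obtain ⟨x, hx, y, hy, hxy⟩ := (hE.2.2 a ha b hb).exists_edgeAdj_across haP hbP
  obtain ⟨hxX, hyX⟩ := hE.mem_of_edgeAdj hxy
  linarith [hc x hxX y hyX hx hy, hxy.dist_le_totalDist]

end MstCost

section MstBounds

variable {M : Type*} [MetricSpace M] [DecidableEq M]

lemma IsSpanningTreeOn.join {U V : Finset M} {EU EV : Finset (M × M)}
    (hEU : IsSpanningTreeOn U EU) (hEV : IsSpanningTreeOn V EV) (hUV : Disjoint U V)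
    {a b : M} (ha : a ∈ U) (hb : b ∈ V) :
    ∃ E, IsSpanningTreeOn (U ∪ V) E ∧ totalDist E = totalDist EU + totalDist EV + dist a b := by
  have hE : Disjoint EU EV := disjoint_left.2 fun e heU heV =>
    disjoint_left.1 hUV (hEU.1 e heU).1 (hEV.1 e heV).1
  have hab : (a, b) ∉ EU ∪ EV := by
    rintro hab
    rcases mem_union.1 hab with h | h
    · exact disjoint_left.1 hUV (hEU.1 _ h).2 hb
    · exact disjoint_left.1 hUV ha (hEV.1 _ h).1
  refine ⟨insert (a, b) (EU ∪ EV), .of_edgeConn_root (fun e he => ?_) ?_ a fun z hz => ?_, ?_⟩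
  · rcases mem_insert.1 he with rfl | he
    · exact ⟨mem_union_left _ ha, mem_union_right _ hb⟩
    rcases mem_union.1 he with he | he
    · exact (hEU.1 e he).imp (mem_union_left _) (mem_union_left _)
    · exact (hEV.1 e he).imp (mem_union_right _) (mem_union_right _)
  · rw [card_insert_of_notMem hab, card_union_of_disjoint hE, card_union_of_disjoint hUV]
    have := hEU.2.1
    have := hEV.2.1
    omega
  · have hU : EU ⊆ insert (a, b) (EU ∪ EV) := subset_union_left.trans (subset_insert _ _)
    have hV : EV ⊆ insert (a, b) (EU ∪ EV) := subset_union_right.trans (subset_insert _ _)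
    rcases mem_union.1 hz with hz | hz
    · exact (hEU.2.2 a ha z hz).mono hU
    · exact EdgeAdj.edgeConn (Or.inl (mem_insert_self _ _)) |>.trans ((hEV.2.2 b hb z hz).mono hV)
  · simp only [totalDist, sum_insert hab, sum_union hE]
    ring

lemma mstCost_union_le {U V : Finset M} (hUV : Disjoint U V) {a b : M} (ha : a ∈ U) (hb : b ∈ V) :
    mstCost (U ∪ V) ≤ mstCost U + mstCost V + dist a b := by
  obtain ⟨EU, hEU, hU⟩ := exists_isSpanningTreeOn_totalDist_eq_mstCost ⟨a, ha⟩
  obtain ⟨EV, hEV, hV⟩ := exists_isSpanningTreeOn_totalDist_eq_mstCost ⟨b, hb⟩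
  obtain ⟨E, hE, hcost⟩ := hEU.join hEV hUV ha hb
  exact (mstCost_le hE).trans_eq (by rw [hcost, hU, hV])

/-- Some edge of `T` joins `U` to `V`. -/
lemma mstCost_union_le_of_isSpanningTreeOn {U V : Finset M} {T : Finset (M × M)}
    (hT : IsSpanningTreeOn (U ∪ V) T) {c : ℝ} (hc : ∀ e ∈ T, dist e.1 e.2 ≤ c)
    (hUV : Disjoint U V) {a b : M} (ha : a ∈ U) (hb : b ∈ V) :
    mstCost (U ∪ V) ≤ mstCost U + mstCost V + c := by
  obtain ⟨x, hx, y, hy, hxy⟩ := (hT.2.2 a (mem_union_left _ ha) b (mem_union_right _ hb)).exists_edgeAdj_across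
    (P := U) ha (disjoint_right.1 hUV hb)
  have hyV : y ∈ V := (mem_union.1 (hT.mem_of_edgeAdj hxy).2).resolve_left hy
  linarith [mstCost_union_le hUV hx hyV, hxy.dist_le hc]

/-- Cut property of minimum spanning trees: otherwise exchanging `h` for the shorter edge
`(x, y)` reconnects the two components and lowers the cost. -/
lemma dist_le_of_mst_cut {S T₁ T₂ : Finset M} {T : Finset (M × M)} (hT : IsSpanningTreeOn S T)
    (hTmin : totalDist T = mstCost S) {h : M × M} (hh : h ∈ T) (hpart : T₁ ∪ T₂ = S)
    (hdisj : Disjoint T₁ T₂)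
    (hcomp : ∀ x ∈ S, ∀ y ∈ S,
      EdgeConn (T.erase h) x y ↔ ((x ∈ T₁ ∧ y ∈ T₁) ∨ (x ∈ T₂ ∧ y ∈ T₂)))
    {x y : M} (hx : x ∈ T₁) (hy : y ∈ T₂) : dist h.1 h.2 ≤ dist x y := by
  subst hpart
  by_contra! hlt
  have hxS := mem_union_left T₂ hx
  have hyS := mem_union_right T₁ hy
  have hxy : (x, y) ∉ T.erase h := fun hxy => by
    rcases (hcomp x hxS y hyS).1 (EdgeAdj.edgeConn (Or.inl hxy)) with ⟨-, hy'⟩ | ⟨hx', -⟩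
    · exact disjoint_left.1 hdisj hy' hy
    · exact disjoint_left.1 hdisj hx hx'
  have hsub : T.erase h ⊆ insert (x, y) (T.erase h) := subset_insert _ _
  have hT' : IsSpanningTreeOn (T₁ ∪ T₂) (insert (x, y) (T.erase h)) := by
    refine .of_edgeConn_root (fun e he => ?_) ?_ x fun z hz => ?_
    · rcases mem_insert.1 he with rfl | he
      · exact ⟨hxS, hyS⟩
      · exact hT.1 e (mem_of_mem_erase he)
    · rw [card_insert_of_notMem hxy, card_erase_of_mem hh, ← hT.2.1]
      have := card_pos.2 ⟨h, hh⟩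
      omega
    · rcases mem_union.1 hz with hz' | hz'
      · exact ((hcomp x hxS z hz).2 (Or.inl ⟨hx, hz'⟩)).mono hsub
      · exact EdgeAdj.edgeConn (Or.inl (mem_insert_self _ _)) |>.trans
          (((hcomp y hyS z hz).2 (Or.inr ⟨hy, hz'⟩)).mono hsub)
  have hcost := mstCost_le hT'
  rw [totalDist, sum_insert hxy, sum_erase_eq_sub hh] at hcost
  rw [totalDist] at hTmin
  linarith

end MstBounds

section Colorings

variable {ι γ : Type*} [Fintype ι] [DecidableEq γ]

/-- `σ : ι → Bool` encodes the feasible colouring with classes `colorClass pts σ` and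
`colorClass pts (fun i => !σ i)`. -/
def colorClass (pts : ι × Bool → γ) (σ : ι → Bool) : Finset γ :=
  univ.image fun i => pts (i, σ i)

lemma mem_colorClass (pts : ι × Bool → γ) (σ : ι → Bool) (i : ι) :
    pts (i, σ i) ∈ colorClass pts σ :=
  mem_image_of_mem _ (mem_univ i)

lemma colorClass_union_not (pts : ι × Bool → γ) (σ : ι → Bool) :
    colorClass pts σ ∪ colorClass pts (fun i => !σ i) = univ.image pts := by
  ext x
  simp only [colorClass, mem_union, mem_image, mem_univ, true_and, Prod.exists]
  constructor
  · rintro (⟨i, rfl⟩ | ⟨i, rfl⟩) <;> exact ⟨_, _, rfl⟩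
  · rintro ⟨i, b, rfl⟩
    rcases Bool.eq_or_eq_not b (σ i) with rfl | rfl
    exacts [Or.inl ⟨i, rfl⟩, Or.inr ⟨i, rfl⟩]

lemma disjoint_colorClass_not {pts : ι × Bool → γ} (hinj : Function.Injective pts)
    (σ : ι → Bool) : Disjoint (colorClass pts σ) (colorClass pts fun i => !σ i) := by
  simp only [colorClass, disjoint_left, mem_image, mem_univ, true_and]
  rintro _ ⟨i, rfl⟩ ⟨j, hj⟩
  obtain ⟨rfl, hσ⟩ := Prod.ext_iff.1 (hinj hj)
  simp at hσ

end Colorings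

theorem every_coloring_six_approx_general
    (n : ℕ)
    (pts : Fin n × Bool → α) (hinj : Function.Injective pts)
    (S : Finset α) (hS : S = Finset.image pts Finset.univ)
    (T : Finset (α × α)) (hT : IsSpanningTreeOn S T)
    (hTmin : (∑ e ∈ T, dist e.1 e.2) = mstCost S)
    (h : α × α) (hh : h ∈ T) (hmax : ∀ e ∈ T, dist e.1 e.2 ≤ dist h.1 h.2)
    (T₁ T₂ : Finset α) (hpart : T₁ ∪ T₂ = S) (hdisj : Disjoint T₁ T₂)
    (hcomp : ∀ x ∈ S, ∀ y ∈ S,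
      EdgeConn (T.erase h) x y ↔ ((x ∈ T₁ ∧ y ∈ T₁) ∨ (x ∈ T₂ ∧ y ∈ T₂)))
    (hpairT₁ : ∃ i : Fin n, pts (i, false) ∈ T₁ ∧ pts (i, true) ∈ T₁)
    (hpairT₂ : ∃ i : Fin n, pts (i, false) ∈ T₂ ∧ pts (i, true) ∈ T₂)
    (σ : Fin n → Bool)
    (R B : Finset α)
    (hR : R = Finset.image (fun i => pts (i, σ i)) Finset.univ)
    (hB : B = Finset.image (fun i => pts (i, !(σ i))) Finset.univ) :
    mstCost R + mstCost B ≤ 6 *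
      ⨅ σ' : Fin n → Bool,
        (mstCost (Finset.image (fun i => pts (i, σ' i)) Finset.univ) +
         mstCost (Finset.image (fun i => pts (i, !(σ' i))) Finset.univ)) := by
  subst hR hB
  obtain ⟨i₁, hi₁⟩ := hpairT₁
  obtain ⟨i₂, hi₂⟩ := hpairT₂
  have hpair₁ : ∀ b, pts (i₁, b) ∈ T₁ := Bool.forall_bool.2 hi₁
  have hpair₂ : ∀ b, pts (i₂, b) ∈ T₂ := Bool.forall_bool.2 hi₂
  have hSσ (σ' : Fin n → Bool) : colorClass pts σ' ∪ colorClass pts (fun i => !σ' i) = S :=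
    hS ▸ colorClass_union_not pts σ'
  have hT₂ : ∀ y ∈ S, y ∉ T₁ → y ∈ T₂ := fun y hy hy₁ =>
    (mem_union.1 (hpart ▸ hy)).resolve_left hy₁
  have hlow (σ' : Fin n → Bool) : dist h.1 h.2 ≤ mstCost (colorClass pts σ') :=
    le_mstCost_of_cut (P := ↑T₁) (mem_colorClass pts σ' i₁) (hpair₁ _) (mem_colorClass pts σ' i₂)
      (disjoint_right.1 hdisj (hpair₂ _)) fun _ _ y hy hx hy₁ =>
        dist_le_of_mst_cut hT hTmin hh hpart hdisj hcomp hx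
          (hT₂ y (hSσ σ' ▸ mem_union_left _ hy) hy₁)
  have hmid (σ' : Fin n → Bool) : mstCost S ≤
      mstCost (colorClass pts σ') + mstCost (colorClass pts fun i => !σ' i) + dist h.1 h.2 :=
    hSσ σ' ▸ mstCost_union_le_of_isSpanningTreeOn ((hSσ σ').symm ▸ hT) hmax
      (disjoint_colorClass_not hinj σ') (mem_colorClass pts σ' i₁)
      (mem_colorClass pts _ i₁)
  have hR := mstCost_le_two_mul_mstCost (hSσ σ ▸ subset_union_left)
  have hB := mstCost_le_two_mul_mstCost (hSσ σ ▸ subset_union_right)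
  rw [Real.mul_iInf_of_nonneg (by norm_num)]
  refine le_ciInf fun σ' => ?_
  change mstCost (colorClass pts σ) + mstCost (colorClass pts fun i => !σ i) ≤
    6 * (mstCost (colorClass pts σ') + mstCost (colorClass pts fun i => !σ' i))
  linarith [hmid σ', hlow σ', hlow fun i => !σ' i]

/-- `S` consists of `n` pairs `{pts (i, false), pts (i, true)}`. Let `T` be
a minimum spanning tree of `S`, `h` a maximum-weight edge of `T`, and `T₁, T₂` the vertex
sets of the two components of `T` after removing `h`. If both points of some pair lie in
`T₁` and both points of some pair lie in `T₂`, then EVERY feasible coloring `S = R ∪ B`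
satisfies `mstCost R + mstCost B ≤ 6 · min over feasible colorings of (mstCost R' + mstCost B')`. -/
theorem every_coloring_six_approx
    (n : ℕ) (hn : 1 ≤ n)
    (pts : Fin n × Bool → α) (hinj : Function.Injective pts)
    (S : Finset α) (hS : S = Finset.image pts Finset.univ)
    (T : Finset (α × α)) (hT : IsSpanningTreeOn S T)
    (hTmin : (∑ e ∈ T, dist e.1 e.2) = mstCost S)
    (h : α × α) (hh : h ∈ T) (hmax : ∀ e ∈ T, dist e.1 e.2 ≤ dist h.1 h.2)
    (T₁ T₂ : Finset α) (hpart : T₁ ∪ T₂ = S) (hdisj : Disjoint T₁ T₂)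
    (hne1 : T₁.Nonempty) (hne2 : T₂.Nonempty)
    (hcomp : ∀ x ∈ S, ∀ y ∈ S,
      EdgeConn (T.erase h) x y ↔ ((x ∈ T₁ ∧ y ∈ T₁) ∨ (x ∈ T₂ ∧ y ∈ T₂)))
    (hpairT₁ : ∃ i : Fin n, pts (i, false) ∈ T₁ ∧ pts (i, true) ∈ T₁)
    (hpairT₂ : ∃ i : Fin n, pts (i, false) ∈ T₂ ∧ pts (i, true) ∈ T₂)
    (σ : Fin n → Bool)
    (R B : Finset α)
    (hR : R = Finset.image (fun i => pts (i, σ i)) Finset.univ)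
    (hB : B = Finset.image (fun i => pts (i, !(σ i))) Finset.univ) :
    mstCost R + mstCost B ≤ 6 *
      ⨅ σ' : Fin n → Bool,
        (mstCost (Finset.image (fun i => pts (i, σ' i)) Finset.univ) +
         mstCost (Finset.image (fun i => pts (i, !(σ' i))) Finset.univ)) :=
  every_coloring_six_approx_general n pts hinj S hS T hT hTmin h hh hmax T₁ T₂ hpart hdisj hcomp
    hpairT₁ hpairT₂ σ R B hR hB
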